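/- arXiv:2603.09057 — 2 statements merged into one kernel-verified Lean document; each statement's English description precedes it below -/
import Mathlib

section
/- Let (V, p) be a quiver datum and suppose there exist invertible matrices g_i ∈ GL(d_i, ℝ) for i ∈ [k] and h_j ∈ GL(n_j, ℝ) for j ∈ [m] such that the transformed datum ((h_j V_a g_i^{-1} : a ∈ 𝒜_{ij}, i ∈ [k], j ∈ [m]), p) is geometric. Then cap(V, p) = (∏_{i=1}^k det(g_i)^2) / (∏_{j=1}^m det(h_j)^{2 p_j}); moreover (V, p) is extremizable and the tuple (h_jᵀ h_j)_{j∈[m]} is an extremizer for (V, p), i.e., the infimum defining cap(V,p) is attained at Y_j = h_jᵀ h_j. -/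
open Matrix BigOperators
set_option linter.unusedSectionVars false
set_option linter.unusedVariables false
set_option maxHeartbeats 1000000

section CBHelpers
open Finset
variable {ι : Type*} [Fintype ι] [DecidableEq ι]


/-- Cauchy-Binet style coefficient. -/
noncomputable def cbCoeff {D : ℕ} (v : ι → Fin D → ℝ) (φ : Fin D → ι) : ℝ :=
  ((D.factorial : ℝ))⁻¹ * (Matrix.of fun r s => v (φ r) s).det ^ 2

lemma cbCoeff_nonneg {D : ℕ} (v : ι → Fin D → ℝ) (φ : Fin D → ι) : 0 ≤ cbCoeff v φ :=
  mul_nonneg (inv_nonneg.2 (Nat.cast_nonneg _)) (sq_nonneg _)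

lemma cbCoeff_eq_zero {D : ℕ} (v : ι → Fin D → ℝ) {φ : Fin D → ι} {r r' : Fin D}
    (hrr : r ≠ r') (hφ : φ r = φ r') : cbCoeff v φ = 0 := by
  have : (Matrix.of fun r s => v (φ r) s).det = 0 :=
    Matrix.det_zero_of_row_eq hrr (show v (φ r) = v (φ r') by rw [hφ])
  simp [cbCoeff, this]

lemma det_sum_smul_vecMulVec {D : ℕ} (v : ι → Fin D → ℝ) (x : ι → ℝ) :
    (∑ t, x t • vecMulVec (v t) (v t)).det
      = ∑ φ : Fin D → ι, cbCoeff v φ * ∏ r, x (φ r) := by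
  classical
  have hrows : (∑ t, x t • vecMulVec (v t) (v t))
      = Matrix.of (fun r => ∑ t, (x t * v t r) • v t) := by
    ext r s
    simp [vecMulVec_apply, Matrix.sum_apply, Matrix.smul_apply, smul_eq_mul, mul_assoc]
  rw [hrows]
  have hdet : ∀ M : Matrix (Fin D) (Fin D) ℝ,
      M.det = Matrix.detRowAlternating M := fun _ => rfl
  rw [hdet]
  have expand : Matrix.detRowAlternating (Matrix.of (fun r => ∑ t, (x t * v t r) • v t))
      = ∑ φ : Fin D → ι, (∏ r, x (φ r)) *
          ((∏ r, v (φ r) r) * (Matrix.of fun r s => v (φ r) s).det) := by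
    have := (Matrix.detRowAlternating
        (R := ℝ) (n := Fin D)).toMultilinearMap.map_sum
        (g := fun (r : Fin D) (t : ι) => (x t * v t r) • v t)
    rw [show (Matrix.detRowAlternating (Matrix.of (fun r => ∑ t, (x t * v t r) • v t)))
        = (Matrix.detRowAlternating (R := ℝ) (n := Fin D)).toMultilinearMap
            (fun r => ∑ t, (x t * v t r) • v t) from rfl, this]
    refine Finset.sum_congr rfl fun φ _ => ?_
    rw [(Matrix.detRowAlternating (R := ℝ)
        (n := Fin D)).toMultilinearMap.map_smul_univ
        (fun r => x (φ r) * v (φ r) r) (fun r => v (φ r))]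
    rw [Finset.prod_mul_distrib]
    simp only [smul_eq_mul, mul_assoc]
    rfl
  rw [expand]
  -- symmetrization
  set w : (Fin D → ι) → ℝ :=
    fun φ => (∏ r, v (φ r) r) * (Matrix.of fun r s => v (φ r) s).det with hw
  have hsym : ∀ σ : Equiv.Perm (Fin D),
      ∑ φ : Fin D → ι, (∏ r, x (φ r)) * w φ
        = ∑ φ : Fin D → ι, (∏ r, x (φ r)) * w (fun r => φ (σ r)) := by
    intro σ
    have he : ∀ φ : Fin D → ι, (Equiv.arrowCongr σ.symm (Equiv.refl ι)) φ = fun r => φ (σ r) := by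
      intro φ; funext r; simp
    rw [← Equiv.sum_comp (Equiv.arrowCongr σ.symm (Equiv.refl ι))
      (fun φ => (∏ r, x (φ r)) * w φ)]
    refine Finset.sum_congr rfl fun φ _ => ?_
    rw [he φ]
    congr 1
    exact Equiv.prod_comp σ (fun r => x (φ r))
  have hperm : ∀ (φ : Fin D → ι), ∑ σ : Equiv.Perm (Fin D), w (fun r => φ (σ r))
      = (Matrix.of fun r s => v (φ r) s).det ^ 2 := by
    intro φ
    set R : Matrix (Fin D) (Fin D) ℝ := Matrix.of fun r s => v (φ r) s with hR
    have : ∀ σ : Equiv.Perm (Fin D),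
        w (fun r => φ (σ r)) = (∏ r, R (σ r) r) * (((Equiv.Perm.sign σ : ℤ) : ℝ) * R.det) := by
      intro σ
      have h2 : (Matrix.of fun r s => v (φ (σ r)) s) = R.submatrix σ id := by
        ext r s; simp [hR, Matrix.submatrix]
      simp only [hw, h2, Matrix.det_permute]
      congr 1
    rw [Finset.sum_congr rfl (fun σ _ => this σ)]
    have : ∑ σ : Equiv.Perm (Fin D), (∏ r, R (σ r) r) * (((Equiv.Perm.sign σ : ℤ) : ℝ) * R.det)
        = (∑ σ : Equiv.Perm (Fin D), ((Equiv.Perm.sign σ : ℤ) : ℝ) * ∏ r, R (σ r) r) * R.det := by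
      rw [Finset.sum_mul]; refine Finset.sum_congr rfl fun σ _ => ?_; ring
    rw [this, ← Matrix.det_apply', sq]
  -- put it together
  have hcard : (Fintype.card (Equiv.Perm (Fin D)) : ℝ) = (D.factorial : ℝ) := by
    rw [Fintype.card_perm, Fintype.card_fin]
  have hfac : (0:ℝ) < (D.factorial : ℝ) := by positivity
  have key : (D.factorial : ℝ) * (∑ φ : Fin D → ι, (∏ r, x (φ r)) * w φ)
      = ∑ φ : Fin D → ι, (∏ r, x (φ r)) * (Matrix.of fun r s => v (φ r) s).det ^ 2 := by
    calc (D.factorial : ℝ) * (∑ φ : Fin D → ι, (∏ r, x (φ r)) * w φ)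
        = ∑ σ : Equiv.Perm (Fin D), ∑ φ : Fin D → ι, (∏ r, x (φ r)) * w (fun r => φ (σ r)) := by
          rw [Finset.sum_congr rfl (fun σ _ => (hsym σ).symm), Finset.sum_const,
            Finset.card_univ, nsmul_eq_mul, hcard]
      _ = ∑ φ : Fin D → ι, ∑ σ : Equiv.Perm (Fin D), (∏ r, x (φ r)) * w (fun r => φ (σ r)) :=
          Finset.sum_comm
      _ = ∑ φ : Fin D → ι, (∏ r, x (φ r)) * (Matrix.of fun r s => v (φ r) s).det ^ 2 := by
          refine Finset.sum_congr rfl fun φ _ => ?_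
          rw [← Finset.mul_sum, hperm φ]
  have h2 : ∑ φ : Fin D → ι, (∏ r, x (φ r)) * w φ
      = ((D.factorial : ℝ))⁻¹ * ∑ φ : Fin D → ι,
          (∏ r, x (φ r)) * (Matrix.of fun r s => v (φ r) s).det ^ 2 := by
    rw [← key, ← mul_assoc, inv_mul_cancel₀ (ne_of_gt hfac), one_mul]
  rw [h2, Finset.mul_sum]
  refine Finset.sum_congr rfl fun φ _ => ?_
  simp only [cbCoeff]; ring

lemma det_one_sub_vecMulVec {D : ℕ} (u : Fin D → ℝ) :
    (1 - vecMulVec u u).det = 1 - ∑ r, u r ^ 2 := by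
  have h1 : (1 : Matrix (Fin D) (Fin D) ℝ) - vecMulVec u u
      = 1 + replicateCol (Fin 1) (-u) * replicateRow (Fin 1) u := by
    rw [Matrix.vecMulVec_eq (Fin 1) u u]
    have : replicateCol (Fin 1) (-u) = -replicateCol (Fin 1) u := by ext i j; simp [Matrix.replicateCol]
    rw [this, Matrix.neg_mul, sub_eq_add_neg]
    rfl
  erw [h1, Matrix.det_one_add_replicateCol_mul_replicateRow]
  simp [dotProduct, sq]
  ring

/-- The key AM-GM lower bound on the determinant. -/
lemma amgm_det {D : ℕ} (v : ι → Fin D → ℝ) (lam : ι → ℝ) (hlam : ∀ t, 0 < lam t)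
    (hI : ∑ t, vecMulVec (v t) (v t) = (1 : Matrix (Fin D) (Fin D) ℝ)) :
    Real.exp (∑ t, (∑ r, v t r ^ 2) * Real.log (lam t))
      ≤ (∑ t, lam t • vecMulVec (v t) (v t)).det := by
  classical
  set c : (Fin D → ι) → ℝ := cbCoeff v with hc
  have hc1 : ∑ φ : Fin D → ι, c φ = 1 := by
    have := det_sum_smul_vecMulVec v (fun _ => (1:ℝ))
    simp only [one_smul, hI, Matrix.det_one, Finset.prod_const_one, mul_one] at this
    exact this.symm
  set mult : (Fin D → ι) → ι → ℕ := fun φ t => (univ.filter fun r => φ r = t).card with hmult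
  -- exponent identity
  have hexp : ∀ t₀ : ι, ∑ φ : Fin D → ι, c φ * (mult φ t₀ : ℝ) = ∑ r, v t₀ r ^ 2 := by
    intro t₀
    have hx := det_sum_smul_vecMulVec v (fun t => if t = t₀ then (0:ℝ) else 1)
    have hsum : (∑ t, (if t = t₀ then (0:ℝ) else 1) • vecMulVec (v t) (v t))
        = 1 - vecMulVec (v t₀) (v t₀) := by
      have step : ∀ t : ι, (if t = t₀ then (0:ℝ) else 1) • vecMulVec (v t) (v t)
          = vecMulVec (v t) (v t) - (if t = t₀ then vecMulVec (v t₀) (v t₀) else 0) := by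
        intro t
        by_cases ht : t = t₀
        · subst ht; simp
        · simp [ht]
      rw [Finset.sum_congr rfl (fun t _ => step t), Finset.sum_sub_distrib, hI,
        Finset.sum_ite_eq' univ t₀ (fun _ => vecMulVec (v t₀) (v t₀))]
      simp
    rw [hsum, det_one_sub_vecMulVec] at hx
    -- per-φ values of the product
    have hprod : ∀ φ : Fin D → ι, c φ * (mult φ t₀ : ℝ)
        = c φ * (1 - ∏ r, (if φ r = t₀ then (0:ℝ) else 1)) := by
      intro φ
      by_cases hr : ∀ r, φ r ≠ t₀
      · have h0 : mult φ t₀ = 0 := by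
          simp only [hmult, Finset.card_eq_zero]
          exact Finset.filter_eq_empty_iff.2 (fun r _ => hr r)
        have h1 : (∏ r, (if φ r = t₀ then (0:ℝ) else 1)) = 1 :=
          Finset.prod_eq_one fun r _ => by simp [hr r]
        rw [h0, h1]; simp
      · push_neg at hr
        obtain ⟨r₀, hr₀⟩ := hr
        have h0 : (∏ r, (if φ r = t₀ then (0:ℝ) else 1)) = 0 :=
          Finset.prod_eq_zero (Finset.mem_univ r₀) (by simp [hr₀])
        rw [h0]
        by_cases h2 : ∃ r r', r ≠ r' ∧ φ r = t₀ ∧ φ r' = t₀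
        · obtain ⟨r, r', hne, h1', h2'⟩ := h2
          have : c φ = 0 := cbCoeff_eq_zero v hne (h1'.trans h2'.symm)
          simp [this]
        · push_neg at h2
          have hm1 : mult φ t₀ = 1 := by
            rw [hmult]
            rw [Finset.card_eq_one]
            refine ⟨r₀, ?_⟩
            ext r
            simp only [Finset.mem_filter, Finset.mem_univ, true_and, Finset.mem_singleton]
            constructor
            · intro hrt
              by_contra hne
              exact (h2 r r₀ hne hrt hr₀).elim
            · intro hrr; subst hrr; exact hr₀
          rw [hm1]; simp
    rw [Finset.sum_congr rfl (fun φ _ => hprod φ)]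
    have : ∑ φ : Fin D → ι, c φ * (1 - ∏ r, (if φ r = t₀ then (0:ℝ) else 1))
        = (∑ φ : Fin D → ι, c φ)
          - ∑ φ : Fin D → ι, c φ * ∏ r, (if φ r = t₀ then (0:ℝ) else 1) := by
      rw [← Finset.sum_sub_distrib]
      exact Finset.sum_congr rfl fun φ _ => by ring
    rw [this, hc1, ← hx]
    ring
  -- AM–GM
  have hPi_pos : ∀ φ : Fin D → ι, 0 < ∏ r, lam (φ r) :=
    fun φ => Finset.prod_pos fun r _ => hlam (φ r)
  have hgm := Real.geom_mean_le_arith_mean_weighted univ c (fun φ => ∏ r, lam (φ r))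
    (fun φ _ => cbCoeff_nonneg v φ) hc1 (fun φ _ => (hPi_pos φ).le)
  rw [det_sum_smul_vecMulVec v lam]
  refine le_trans ?_ hgm
  -- identify the geometric mean with the exponential
  have hlog : ∀ φ : Fin D → ι, (∏ r, lam (φ r)) ^ (c φ)
      = Real.exp (c φ * ∑ r, Real.log (lam (φ r))) := by
    intro φ
    rw [Real.rpow_def_of_pos (hPi_pos φ), Real.log_prod (fun r _ => (hlam (φ r)).ne')]
    ring_nf
  rw [Finset.prod_congr rfl (fun φ _ => hlog φ), ← Real.exp_sum]
  apply le_of_eq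
  congr 1
  -- rearrange the double sum
  have hswap : ∀ φ : Fin D → ι, ∑ r, Real.log (lam (φ r))
      = ∑ t : ι, (mult φ t : ℝ) * Real.log (lam t) := by
    intro φ
    rw [← Finset.sum_fiberwise_of_maps_to (g := φ) (fun r _ => Finset.mem_univ (φ r))
      (fun r => Real.log (lam (φ r)))]
    refine Finset.sum_congr rfl fun t _ => ?_
    rw [hmult]
    rw [Finset.sum_congr rfl (fun r hr => by
      rw [(Finset.mem_filter.1 hr).2])]
    simp [Finset.sum_const, nsmul_eq_mul]
  calc ∑ t : ι, (∑ r, v t r ^ 2) * Real.log (lam t)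
      = ∑ t : ι, (∑ φ : Fin D → ι, c φ * (mult φ t : ℝ)) * Real.log (lam t) := by
        exact Finset.sum_congr rfl fun t _ => by rw [hexp t]
    _ = ∑ t : ι, ∑ φ : Fin D → ι, c φ * ((mult φ t : ℝ) * Real.log (lam t)) := by
        refine Finset.sum_congr rfl fun t _ => ?_
        rw [Finset.sum_mul]
        exact Finset.sum_congr rfl fun φ _ => by ring
    _ = ∑ φ : Fin D → ι, ∑ t : ι, c φ * ((mult φ t : ℝ) * Real.log (lam t)) := Finset.sum_comm
    _ = ∑ φ : Fin D → ι, c φ * ∑ r, Real.log (lam (φ r)) := by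
        refine Finset.sum_congr rfl fun φ _ => ?_
        rw [hswap φ, Finset.mul_sum]

end CBHelpers

section GeomHelpers
open Finset
lemma mul_diagonal_mul_transpose {q : ℕ} (U : Matrix (Fin q) (Fin q) ℝ) (w : Fin q → ℝ) :
    U * diagonal w * Uᵀ = ∑ s, w s • vecMulVec (fun r => U r s) (fun r => U r s) := by
  ext r c
  simp only [Matrix.mul_apply, Matrix.diagonal_apply, Matrix.transpose_apply,
    Matrix.sum_apply, Matrix.smul_apply, vecMulVec_apply, smul_eq_mul, mul_ite, mul_zero,
    ite_mul, zero_mul]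
  refine Finset.sum_congr rfl fun s _ => ?_
  rw [Finset.sum_ite_eq' univ s (fun x => U r x * w x)]
  simp only [Finset.mem_univ, if_true]
  ring

lemma conj_vecMulVec {q D : ℕ} (W : Matrix (Fin q) (Fin D) ℝ) (u : Fin q → ℝ) :
    Wᵀ * vecMulVec u u * W = vecMulVec (u ᵥ* W) (u ᵥ* W) := by
  ext x y
  have lhs : (Wᵀ * vecMulVec u u * W) x y = ∑ cc, ∑ r, W r x * (u r * u cc) * W cc y := by
    rw [Matrix.mul_apply]
    refine Finset.sum_congr rfl fun cc _ => ?_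
    rw [Matrix.mul_apply, Finset.sum_mul]
    exact Finset.sum_congr rfl fun r _ => by rw [Matrix.transpose_apply, vecMulVec_apply]
  have rhs : (vecMulVec (u ᵥ* W) (u ᵥ* W)) x y = ∑ r, ∑ cc, (u r * W r x) * (u cc * W cc y) := by
    rw [vecMulVec_apply]
    simp only [Matrix.vecMul, dotProduct]
    rw [Finset.sum_mul]
    refine Finset.sum_congr rfl fun r _ => ?_
    rw [Finset.mul_sum]
  rw [lhs, rhs, Finset.sum_comm]
  exact Finset.sum_congr rfl fun r _ => Finset.sum_congr rfl fun cc _ => by ring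

lemma smul_vecMulVec {q : ℕ} (c : ℝ) (w w' : Fin q → ℝ) :
    vecMulVec (c • w) (c • w') = (c * c) • vecMulVec w w' := by
  ext x y
  simp [vecMulVec_apply]
  ring

lemma sq_sum_vecMul {q D : ℕ} (W : Matrix (Fin q) (Fin D) ℝ) (u : Fin q → ℝ) :
    ∑ x, ((u ᵥ* W) x)^2 = u ⬝ᵥ ((W * Wᵀ) *ᵥ u) := by
  rw [← Matrix.mulVec_mulVec, Matrix.dotProduct_mulVec, Matrix.mulVec_transpose]
  simp [dotProduct, sq]

lemma quad_sum {q : ℕ} {α : Type*} [Fintype α] (M : α → Matrix (Fin q) (Fin q) ℝ)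
    (u : Fin q → ℝ) :
    ∑ x : α, u ⬝ᵥ (M x *ᵥ u) = u ⬝ᵥ ((∑ x, M x) *ᵥ u) := by
  calc ∑ x : α, u ⬝ᵥ (M x *ᵥ u)
      = ∑ x : α, ∑ r, ∑ c, u r * (M x r c * u c) := by
        refine Finset.sum_congr rfl fun x _ => ?_
        simp [dotProduct, Matrix.mulVec, Finset.mul_sum]
    _ = ∑ r, ∑ x : α, ∑ c, u r * (M x r c * u c) := Finset.sum_comm
    _ = ∑ r, ∑ c, ∑ x : α, u r * (M x r c * u c) :=
        Finset.sum_congr rfl fun r _ => Finset.sum_comm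
    _ = u ⬝ᵥ ((∑ x, M x) *ᵥ u) := by
        simp [dotProduct, Matrix.mulVec, Matrix.sum_apply, Finset.mul_sum, Finset.sum_mul]

/-- lower bound for the capacity functional of a geometric datum. -/
lemma geometric_lower_bound {k m : ℕ} {d : Fin k → ℕ} {n : Fin m → ℕ} {A : Fin k → Fin m → ℕ}
    {p : Fin m → ℝ} (hp : ∀ j, 0 < p j)
    (W : ∀ i : Fin k, ∀ j : Fin m, Fin (A i j) → Matrix (Fin (n j)) (Fin (d i)) ℝ)
    (hg1 : ∀ i, ∑ j : Fin m, p j • ∑ a : Fin (A i j), (W i j a)ᵀ * W i j a = 1)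
    (hg2 : ∀ j, ∑ i : Fin k, ∑ a : Fin (A i j), W i j a * (W i j a)ᵀ = 1)
    (Z : ∀ j : Fin m, Matrix (Fin (n j)) (Fin (n j)) ℝ) (hZ : ∀ j, (Z j).PosDef) :
    ∏ j, (Z j).det ^ (p j)
      ≤ ∏ i, (∑ j : Fin m, p j • ∑ a : Fin (A i j), (W i j a)ᵀ * Z j * (W i j a)).det := by
  classical
  have hH : ∀ j, (Z j).IsHermitian := fun j => (hZ j).1
  set lam : ∀ j : Fin m, Fin (n j) → ℝ := fun j => (hH j).eigenvalues with hlamdef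
  have hlam : ∀ j s, 0 < lam j s := fun j s => (hZ j).eigenvalues_pos s
  set U : ∀ j : Fin m, Matrix (Fin (n j)) (Fin (n j)) ℝ :=
    fun j => ((hH j).eigenvectorUnitary : Matrix (Fin (n j)) (Fin (n j)) ℝ) with hUdef
  set u : ∀ j : Fin m, Fin (n j) → Fin (n j) → ℝ := fun j s r => U j r s with hudef
  have hUUT : ∀ j, U j * (U j)ᵀ = 1 := by
    intro j
    have := (Matrix.mem_unitaryGroup_iff).mp ((hH j).eigenvectorUnitary).2
    rwa [Matrix.star_eq_conjTranspose, Matrix.conjTranspose_eq_transpose_of_trivial] at this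
  have hUTU : ∀ j, (U j)ᵀ * U j = 1 := by
    intro j
    have := (Matrix.mem_unitaryGroup_iff').mp ((hH j).eigenvectorUnitary).2
    rwa [Matrix.star_eq_conjTranspose, Matrix.conjTranspose_eq_transpose_of_trivial] at this
  have hspec : ∀ j, Z j = ∑ s, lam j s • vecMulVec (u j s) (u j s) := by
    intro j
    have h0 := (hH j).spectral_theorem
    rw [Unitary.conjStarAlgAut_apply, Matrix.star_eq_conjTranspose, Matrix.conjTranspose_eq_transpose_of_trivial,
      RCLike.ofReal_real_eq_id] at h0
    simp only [Function.id_comp] at h0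
    rw [h0, mul_diagonal_mul_transpose]
  have hone : ∀ j, ∑ s, vecMulVec (u j s) (u j s) = 1 := by
    intro j
    have h2 := mul_diagonal_mul_transpose (U j) (fun _ => (1:ℝ))
    rw [Matrix.diagonal_one, Matrix.mul_one, hUUT j] at h2
    rw [h2]
    exact Finset.sum_congr rfl fun s _ => (one_smul ℝ _).symm
  have hunit : ∀ j s, ∑ r, (u j s r)^2 = 1 := by
    intro j s
    have h0 := hUTU j
    have h1 := congrFun (congrFun h0 s) s
    simp only [Matrix.mul_apply, Matrix.transpose_apply, Matrix.one_apply_eq] at h1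
    rw [← h1]
    exact Finset.sum_congr rfl fun r _ => by rw [sq]
  -- per-i inequality
  have main : ∀ i, Real.exp (∑ j, ∑ a : Fin (A i j), ∑ s,
        (p j * ∑ x, ((u j s ᵥ* W i j a) x)^2) * Real.log (lam j s))
      ≤ (∑ j : Fin m, p j • ∑ a : Fin (A i j), (W i j a)ᵀ * Z j * (W i j a)).det := by
    intro i
    set ιi := (Σ j : Fin m, Fin (A i j) × Fin (n j)) with hιi
    have hsig : ∀ {β : Type} [inst : AddCommMonoid β] (f : ιi → β),
        ∑ t : ιi, f t = ∑ j, ∑ a : Fin (A i j), ∑ s : Fin (n j), f ⟨j, (a, s)⟩ := by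
      intro β _ f
      rw [← Finset.univ_sigma_univ, Finset.sum_sigma]
      exact Finset.sum_congr rfl fun j _ => by rw [Fintype.sum_prod_type]
    set v : ιi → Fin (d i) → ℝ :=
      fun t => Real.sqrt (p t.1) • ((u t.1 t.2.2) ᵥ* (W i t.1 t.2.1)) with hvdef
    set lamt : ιi → ℝ := fun t => lam t.1 t.2.2 with hlamtdef
    have hvv : ∀ (j : Fin m) (a : Fin (A i j)) (s : Fin (n j)),
        vecMulVec (v ⟨j, (a, s)⟩) (v ⟨j, (a, s)⟩)
        = p j • ((W i j a)ᵀ * vecMulVec (u j s) (u j s) * (W i j a)) := by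
      intro j a s
      show vecMulVec (Real.sqrt (p j) • (u j s ᵥ* W i j a))
          (Real.sqrt (p j) • (u j s ᵥ* W i j a)) = _
      rw [_root_.smul_vecMulVec, Real.mul_self_sqrt (hp j).le, conj_vecMulVec]
    have hIc : ∑ t : ιi, vecMulVec (v t) (v t) = 1 := by
      rw [hsig]
      have : ∀ j, ∑ a : Fin (A i j), ∑ s : Fin (n j),
          vecMulVec (v ⟨j, (a, s)⟩) (v ⟨j, (a, s)⟩)
          = p j • ∑ a : Fin (A i j), (W i j a)ᵀ * W i j a := by
        intro j
        rw [Finset.smul_sum]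
        refine Finset.sum_congr rfl fun a _ => ?_
        rw [Finset.sum_congr rfl (fun s _ => hvv j a s), ← Finset.smul_sum]
        congr 1
        rw [← Matrix.sum_mul, ← Matrix.mul_sum, hone j, Matrix.mul_one]
      rw [Finset.sum_congr rfl (fun j _ => this j)]
      exact hg1 i
    have hM : (∑ j : Fin m, p j • ∑ a : Fin (A i j), (W i j a)ᵀ * Z j * (W i j a))
        = ∑ t : ιi, lamt t • vecMulVec (v t) (v t) := by
      rw [hsig]
      refine Finset.sum_congr rfl fun j _ => ?_
      rw [Finset.smul_sum]
      refine Finset.sum_congr rfl fun a _ => ?_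
      rw [hspec j]
      have expand : (W i j a)ᵀ * (∑ s, lam j s • vecMulVec (u j s) (u j s)) * (W i j a)
          = ∑ s, lam j s • ((W i j a)ᵀ * vecMulVec (u j s) (u j s) * (W i j a)) := by
        rw [Matrix.mul_sum, Matrix.sum_mul]
        refine Finset.sum_congr rfl fun s _ => ?_
        rw [Matrix.mul_smul, Matrix.smul_mul]
      rw [expand, Finset.smul_sum]
      refine Finset.sum_congr rfl fun s _ => ?_
      rw [hvv j a s, smul_smul, smul_smul]
      congr 1
      show p j * lam j s = lam j s * p j
      ring
    have hamgm := amgm_det v lamt (fun t => hlam t.1 t.2.2) hIc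
    rw [← hM] at hamgm
    refine le_trans (le_of_eq ?_) hamgm
    congr 1
    rw [hsig (f := fun t => (∑ r, v t r ^ 2) * Real.log (lamt t))]
    refine Finset.sum_congr rfl fun j _ => Finset.sum_congr rfl fun a _ =>
      Finset.sum_congr rfl fun s _ => ?_
    show _ = (∑ r, (Real.sqrt (p j) • (u j s ᵥ* W i j a)) r ^ 2) * Real.log (lam j s)
    congr 1
    simp only [Pi.smul_apply, smul_eq_mul, mul_pow, Real.sq_sqrt (hp j).le]
    rw [← Finset.mul_sum]
  -- assemble over i
  have hprod : Real.exp (∑ i, ∑ j, ∑ a : Fin (A i j), ∑ s,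
        (p j * ∑ x, ((u j s ᵥ* W i j a) x)^2) * Real.log (lam j s))
      ≤ ∏ i, (∑ j : Fin m, p j • ∑ a : Fin (A i j), (W i j a)ᵀ * Z j * (W i j a)).det := by
    rw [Real.exp_sum]
    exact Finset.prod_le_prod (fun i _ => (Real.exp_pos _).le) (fun i _ => main i)
  refine le_trans (le_of_eq ?_) hprod
  -- identify the exponent
  have hQ : ∀ j s, ∑ i, ∑ a : Fin (A i j), ∑ x, ((u j s ᵥ* W i j a) x)^2 = 1 := by
    intro j s
    have h1 : ∀ i, ∑ a : Fin (A i j), ∑ x, ((u j s ᵥ* W i j a) x)^2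
        = ∑ a : Fin (A i j), (u j s) ⬝ᵥ ((W i j a * (W i j a)ᵀ) *ᵥ (u j s)) :=
      fun i => Finset.sum_congr rfl fun a _ => sq_sum_vecMul _ _
    rw [Finset.sum_congr rfl fun i _ => h1 i]
    rw [Finset.sum_congr rfl fun i _ =>
      quad_sum (fun a : Fin (A i j) => W i j a * (W i j a)ᵀ) (u j s)]
    rw [quad_sum (fun i : Fin k => (∑ a : Fin (A i j), W i j a * (W i j a)ᵀ)) (u j s)]
    rw [hg2 j, Matrix.one_mulVec]
    rw [← hunit j s]
    simp [dotProduct, sq]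
  -- swap sums : ∑ i ∑ j ∑ a ∑ s  =  ∑ j ∑ s (p j * 1 * log lam)
  have swap : ∑ i, ∑ j, ∑ a : Fin (A i j), ∑ s,
        (p j * ∑ x, ((u j s ᵥ* W i j a) x)^2) * Real.log (lam j s)
      = ∑ j, ∑ s, p j * Real.log (lam j s) := by
    rw [Finset.sum_comm]
    refine Finset.sum_congr rfl fun j _ => ?_
    have : ∀ i, ∑ a : Fin (A i j), ∑ s, (p j * ∑ x, ((u j s ᵥ* W i j a) x)^2)
          * Real.log (lam j s)
        = ∑ s, ∑ a : Fin (A i j), (p j * ∑ x, ((u j s ᵥ* W i j a) x)^2)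
          * Real.log (lam j s) := fun i => Finset.sum_comm
    rw [Finset.sum_congr rfl fun i _ => this i, Finset.sum_comm]
    refine Finset.sum_congr rfl fun s _ => ?_
    have : ∑ i, ∑ a : Fin (A i j), (p j * ∑ x, ((u j s ᵥ* W i j a) x)^2) * Real.log (lam j s)
        = p j * (∑ i, ∑ a : Fin (A i j), ∑ x, ((u j s ᵥ* W i j a) x)^2) * Real.log (lam j s) := by
      rw [Finset.mul_sum, Finset.sum_mul]
      refine Finset.sum_congr rfl fun i _ => ?_
      rw [Finset.mul_sum, Finset.sum_mul]
    rw [this, hQ j s]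
    ring
  rw [swap]
  -- final : ∏ j (det Z j) ^ p j = exp (∑ j ∑ s p j log lam j s)
  have hdetZ : ∀ j, (Z j).det = ∏ s, lam j s := by
    intro j
    have := (hH j).det_eq_prod_eigenvalues
    simpa using this
  rw [Real.exp_sum]
  refine Finset.prod_congr rfl fun j _ => ?_
  rw [Real.rpow_def_of_pos (hZ j).det_pos, hdetZ j,
    Real.log_prod (fun s _ => (hlam j s).ne')]
  congr 1
  rw [Finset.sum_mul]
  exact Finset.sum_congr rfl fun s _ => by ring

end GeomHelpers

lemma posDef_conj {q : ℕ} {Y B : Matrix (Fin q) (Fin q) ℝ} (hY : Y.PosDef)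
    (hB : IsUnit B.det) : (Bᵀ * Y * B).PosDef := by
  refine Matrix.PosDef.of_dotProduct_mulVec_pos ?_ ?_
  · have := Matrix.isHermitian_conjTranspose_mul_mul B hY.1
    rwa [Matrix.conjTranspose_eq_transpose_of_trivial] at this
  · intro x hx
    have hBx : B *ᵥ x ≠ 0 := by
      intro h0
      apply hx
      have h1 : B⁻¹ *ᵥ (B *ᵥ x) = x := by
        rw [Matrix.mulVec_mulVec, Matrix.nonsing_inv_mul _ hB, Matrix.one_mulVec]
      rw [h0, Matrix.mulVec_zero] at h1
      exact h1.symm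
    have goal' : 0 < star x ⬝ᵥ ((Bᴴ * Y * B) *ᵥ x) := by
      simpa only [Matrix.star_mulVec, Matrix.dotProduct_mulVec, Matrix.vecMul_vecMul]
        using hY.dotProduct_mulVec_pos hBx
    rwa [Matrix.conjTranspose_eq_transpose_of_trivial] at goal'




/-- The value of the capacity functional of a quiver datum `(V, p)` at a tuple `Y`
of `n j × n j` matrices. -/
noncomputable def capVal {k m : ℕ} {d : Fin k → ℕ} {n : Fin m → ℕ} {A : Fin k → Fin m → ℕ}
    (p : Fin m → ℝ)
    (V : ∀ i : Fin k, ∀ j : Fin m, Fin (A i j) → Matrix (Fin (n j)) (Fin (d i)) ℝ)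
    (Y : ∀ j : Fin m, Matrix (Fin (n j)) (Fin (n j)) ℝ) : ℝ :=
  (∏ i : Fin k, (∑ j : Fin m, p j • ∑ a : Fin (A i j), (V i j a)ᵀ * Y j * V i j a).det) /
    ∏ j : Fin m, (Y j).det ^ (p j)

/-- The capacity `cap(V, p)` of a quiver datum: the infimum of the capacity functional
over all tuples of positive definite matrices. -/
noncomputable def cap {k m : ℕ} {d : Fin k → ℕ} {n : Fin m → ℕ} {A : Fin k → Fin m → ℕ}
    (p : Fin m → ℝ)
    (V : ∀ i : Fin k, ∀ j : Fin m, Fin (A i j) → Matrix (Fin (n j)) (Fin (d i)) ℝ) : ℝ :=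
  sInf { r : ℝ | ∃ Y : ∀ j : Fin m, Matrix (Fin (n j)) (Fin (n j)) ℝ,
    (∀ j, (Y j).PosDef) ∧ r = capVal p V Y }

/-- A quiver datum `(V, p)` is extremizable if it is feasible (`cap(V,p) > 0`) and the
infimum defining the capacity is attained at some tuple of positive definite matrices. -/
def Extremizable {k m : ℕ} {d : Fin k → ℕ} {n : Fin m → ℕ} {A : Fin k → Fin m → ℕ}
    (p : Fin m → ℝ)
    (V : ∀ i : Fin k, ∀ j : Fin m, Fin (A i j) → Matrix (Fin (n j)) (Fin (d i)) ℝ) : Prop :=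
  0 < cap p V ∧ ∃ Y : ∀ j : Fin m, Matrix (Fin (n j)) (Fin (n j)) ℝ,
    (∀ j, (Y j).PosDef) ∧ capVal p V Y = cap p V

/-- A quiver datum `(V, p)` is geometric. -/
def IsGeometric {k m : ℕ} {d : Fin k → ℕ} {n : Fin m → ℕ} {A : Fin k → Fin m → ℕ}
    (p : Fin m → ℝ)
    (V : ∀ i : Fin k, ∀ j : Fin m, Fin (A i j) → Matrix (Fin (n j)) (Fin (d i)) ℝ) : Prop :=
  (∀ i, ∑ j : Fin m, p j • ∑ a : Fin (A i j), (V i j a)ᵀ * V i j a = 1) ∧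
  (∀ j, ∑ i : Fin k, ∑ a : Fin (A i j), V i j a * (V i j a)ᵀ = 1)

/-- If `g_i ∈ GL(d_i, ℝ)` and `h_j ∈ GL(n_j, ℝ)` transform `(V, p)` into a
geometric datum, then `cap(V, p) = (∏_i det(g_i)²) / (∏_j det(h_j)^{2 p_j})`; moreover
`(V, p)` is extremizable and `(h_jᵀ h_j)_j` is an extremizer, i.e. the tuple is positive
definite and the infimum defining `cap(V, p)` is attained there. -/
theorem cap_of_transform_to_geometric {k m : ℕ} (hk : 0 < k) (hm : 0 < m)
    {d : Fin k → ℕ} {n : Fin m → ℕ} {A : Fin k → Fin m → ℕ} {p : Fin m → ℝ}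
    (hd : ∀ i, 0 < d i) (hn : ∀ j, 0 < n j) (hp : ∀ j, 0 < p j)
    (hbal : ∑ i : Fin k, (d i : ℝ) = ∑ j : Fin m, p j * (n j : ℝ))
    (V : ∀ i : Fin k, ∀ j : Fin m, Fin (A i j) → Matrix (Fin (n j)) (Fin (d i)) ℝ)
    (g : ∀ i : Fin k, Matrix (Fin (d i)) (Fin (d i)) ℝ)
    (h : ∀ j : Fin m, Matrix (Fin (n j)) (Fin (n j)) ℝ)
    (hg : ∀ i, IsUnit (g i).det) (hh : ∀ j, IsUnit (h j).det)
    (hgeom : IsGeometric p (fun i j a => h j * V i j a * (g i)⁻¹)) :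
    cap p V = (∏ i : Fin k, (g i).det ^ 2) / (∏ j : Fin m, ((h j).det ^ 2) ^ (p j)) ∧
    Extremizable p V ∧
    (∀ j, ((h j)ᵀ * h j).PosDef) ∧
    capVal p V (fun j => (h j)ᵀ * h j) = cap p V := by
  classical
  set W : ∀ i : Fin k, ∀ j : Fin m, Fin (A i j) → Matrix (Fin (n j)) (Fin (d i)) ℝ :=
    fun i j a => h j * V i j a * (g i)⁻¹ with hWdef
  have hg1 : ∀ i, ∑ j : Fin m, p j • ∑ a : Fin (A i j), (W i j a)ᵀ * W i j a = 1 := hgeom.1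
  have hg2 : ∀ j, ∑ i : Fin k, ∑ a : Fin (A i j), W i j a * (W i j a)ᵀ = 1 := hgeom.2
  set C : ℝ := (∏ i : Fin k, (g i).det ^ 2) / (∏ j : Fin m, ((h j).det ^ 2) ^ (p j)) with hCdef
  -- basic positivity
  have hgdet : ∀ i, (g i).det ≠ 0 := fun i => (isUnit_iff_ne_zero).1 (hg i)
  have hhdet : ∀ j, (h j).det ≠ 0 := fun j => (isUnit_iff_ne_zero).1 (hh j)
  have hCnum : 0 < ∏ i : Fin k, (g i).det ^ 2 :=
    Finset.prod_pos fun i _ => pow_two_pos_of_ne_zero (hgdet i)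
  have hCden : 0 < ∏ j : Fin m, ((h j).det ^ 2) ^ (p j) :=
    Finset.prod_pos fun j _ => Real.rpow_pos_of_pos (pow_two_pos_of_ne_zero (hhdet j)) _
  have hC : 0 < C := div_pos hCnum hCden
  -- recovering V from W
  have hVW : ∀ i j a, V i j a = (h j)⁻¹ * W i j a * g i := by
    intro i j a
    symm
    calc (h j)⁻¹ * (h j * V i j a * (g i)⁻¹) * g i
        = (h j)⁻¹ * (h j * (V i j a * (g i)⁻¹)) * g i := by rw [Matrix.mul_assoc (h j)]
      _ = (V i j a * (g i)⁻¹) * g i := by rw [Matrix.nonsing_inv_mul_cancel_left _ _ (hh j)]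
      _ = V i j a * ((g i)⁻¹ * g i) := by rw [Matrix.mul_assoc]
      _ = V i j a := by rw [Matrix.nonsing_inv_mul _ (hg i), Matrix.mul_one]
  -- the transformed tuple
  have hZpos : ∀ (Y : ∀ j : Fin m, Matrix (Fin (n j)) (Fin (n j)) ℝ), (∀ j, (Y j).PosDef) →
      ∀ j, (((h j)⁻¹)ᵀ * Y j * (h j)⁻¹).PosDef := fun Y hY j =>
    posDef_conj (hY j) (Matrix.isUnit_nonsing_inv_det _ (hh j))
  -- numerator transformation
  have hM : ∀ (Y : ∀ j : Fin m, Matrix (Fin (n j)) (Fin (n j)) ℝ) (i : Fin k),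
      (∑ j : Fin m, p j • ∑ a : Fin (A i j), (V i j a)ᵀ * Y j * V i j a)
      = (g i)ᵀ * (∑ j : Fin m, p j • ∑ a : Fin (A i j),
          (W i j a)ᵀ * (((h j)⁻¹)ᵀ * Y j * (h j)⁻¹) * W i j a) * g i := by
    intro Y i
    have pull : (g i)ᵀ * (∑ j : Fin m, p j • ∑ a : Fin (A i j),
          (W i j a)ᵀ * (((h j)⁻¹)ᵀ * Y j * (h j)⁻¹) * W i j a) * g i
        = ∑ j : Fin m, p j • ∑ a : Fin (A i j),
            (g i)ᵀ * ((W i j a)ᵀ * (((h j)⁻¹)ᵀ * Y j * (h j)⁻¹) * W i j a) * g i := by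
      rw [Matrix.mul_sum, Matrix.sum_mul]
      refine Finset.sum_congr rfl fun j _ => ?_
      rw [Matrix.mul_smul, Matrix.smul_mul, Matrix.mul_sum, Matrix.sum_mul]
    rw [pull]
    refine Finset.sum_congr rfl fun j _ => ?_
    congr 1
    refine Finset.sum_congr rfl fun a _ => ?_
    rw [hVW i j a]
    simp only [Matrix.transpose_mul, Matrix.mul_assoc]
  -- determinant of numerator factors
  have hdetM : ∀ (Y : ∀ j : Fin m, Matrix (Fin (n j)) (Fin (n j)) ℝ),
      (∏ i : Fin k, (∑ j : Fin m, p j • ∑ a : Fin (A i j), (V i j a)ᵀ * Y j * V i j a).det)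
      = (∏ i : Fin k, (g i).det ^ 2) * ∏ i : Fin k, (∑ j : Fin m, p j • ∑ a : Fin (A i j),
          (W i j a)ᵀ * (((h j)⁻¹)ᵀ * Y j * (h j)⁻¹) * W i j a).det := by
    intro Y
    rw [← Finset.prod_mul_distrib]
    refine Finset.prod_congr rfl fun i _ => ?_
    rw [hM Y i, Matrix.det_mul, Matrix.det_mul, Matrix.det_transpose]
    ring
  -- determinant of Y in terms of Z
  have hdetY : ∀ (Y : ∀ j : Fin m, Matrix (Fin (n j)) (Fin (n j)) ℝ) (j : Fin m),
      (Y j).det = (h j).det ^ 2 * (((h j)⁻¹)ᵀ * Y j * (h j)⁻¹).det := by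
    intro Y j
    rw [Matrix.det_mul, Matrix.det_mul, Matrix.det_transpose, Matrix.det_nonsing_inv,
      Ring.inverse_eq_inv]
    field_simp [hhdet j]
  -- capVal transformation
  have hcap : ∀ (Y : ∀ j : Fin m, Matrix (Fin (n j)) (Fin (n j)) ℝ), (∀ j, (Y j).PosDef) →
      capVal p V Y = C * capVal p W (fun j => ((h j)⁻¹)ᵀ * Y j * (h j)⁻¹) := by
    intro Y hY
    have hden : ∏ j : Fin m, (Y j).det ^ (p j)
        = (∏ j : Fin m, ((h j).det ^ 2) ^ (p j))
          * ∏ j : Fin m, (((h j)⁻¹)ᵀ * Y j * (h j)⁻¹).det ^ (p j) := by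
      rw [← Finset.prod_mul_distrib]
      refine Finset.prod_congr rfl fun j _ => ?_
      rw [hdetY Y j, Real.mul_rpow (sq_nonneg _) (hZpos Y hY j).det_pos.le]
    unfold capVal
    rw [hdetM Y, hden, hCdef, div_mul_div_comm]
  -- lower bound: geometric capVal at least one
  have hgeom_lb : ∀ (Z : ∀ j : Fin m, Matrix (Fin (n j)) (Fin (n j)) ℝ),
      (∀ j, (Z j).PosDef) → 1 ≤ capVal p W Z := by
    intro Z hZ
    have num := geometric_lower_bound hp W hg1 hg2 Z hZ
    have den_pos : 0 < ∏ j : Fin m, (Z j).det ^ (p j) :=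
      Finset.prod_pos fun j _ => Real.rpow_pos_of_pos (hZ j).det_pos _
    unfold capVal
    exact (one_le_div den_pos).2 num
  -- the candidate extremizer
  have hY0pos : ∀ j, ((h j)ᵀ * h j).PosDef := by
    intro j
    have := posDef_conj (Matrix.PosDef.one (n := Fin (n j)) (R := ℝ)) (hh j)
    rwa [Matrix.mul_one] at this
  have hZ0 : ∀ j, ((h j)⁻¹)ᵀ * ((h j)ᵀ * h j) * (h j)⁻¹ = 1 := by
    intro j
    have e1 : ((h j)⁻¹)ᵀ * ((h j)ᵀ * h j) * (h j)⁻¹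
        = (((h j)⁻¹)ᵀ * (h j)ᵀ) * (h j * (h j)⁻¹) := by
      simp only [Matrix.mul_assoc]
    rw [e1, ← Matrix.transpose_mul, Matrix.mul_nonsing_inv _ (hh j)]
    simp
  have hcapW1 : capVal p W (fun _ => (1 : Matrix _ _ ℝ)) = 1 := by
    unfold capVal
    have hnum : ∀ i, (∑ j : Fin m, p j • ∑ a : Fin (A i j),
        (W i j a)ᵀ * (1 : Matrix (Fin (n j)) (Fin (n j)) ℝ) * W i j a) = 1 := by
      intro i
      rw [← hg1 i]
      refine Finset.sum_congr rfl fun j _ => ?_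
      congr 1
      refine Finset.sum_congr rfl fun a _ => ?_
      rw [Matrix.mul_one]
    rw [Finset.prod_congr rfl fun i _ => by rw [hnum i]]
    simp [Real.one_rpow]
  have hY0 : capVal p V (fun j => (h j)ᵀ * h j) = C := by
    rw [hcap (fun j => (h j)ᵀ * h j) hY0pos]
    have heq : (fun j => ((h j)⁻¹)ᵀ * ((h j)ᵀ * h j) * (h j)⁻¹)
        = (fun j : Fin m => (1 : Matrix (Fin (n j)) (Fin (n j)) ℝ)) := funext hZ0
    rw [heq, hcapW1, mul_one]
  -- the capacity equals C
  have hlb : ∀ r ∈ { r : ℝ | ∃ Y : ∀ j : Fin m, Matrix (Fin (n j)) (Fin (n j)) ℝ,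
      (∀ j, (Y j).PosDef) ∧ r = capVal p V Y }, C ≤ r := by
    rintro r ⟨Y, hYpos, rfl⟩
    rw [hcap Y hYpos]
    exact le_mul_of_one_le_right hC.le (hgeom_lb _ (hZpos Y hYpos))
  have hmem : C ∈ { r : ℝ | ∃ Y : ∀ j : Fin m, Matrix (Fin (n j)) (Fin (n j)) ℝ,
      (∀ j, (Y j).PosDef) ∧ r = capVal p V Y } := ⟨fun j => (h j)ᵀ * h j, hY0pos, hY0.symm⟩
  have hcapV : cap p V = C := IsLeast.csInf_eq ⟨hmem, hlb⟩
  refine ⟨hcapV, ⟨?_, ?_⟩, hY0pos, ?_⟩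
  · rw [hcapV]; exact hC
  · exact ⟨fun j => (h j)ᵀ * h j, hY0pos, hY0.trans hcapV.symm⟩
  · rw [hY0, hcapV]
end

section
/- Let V be a quiver datum with dimension vector d = (d_1,…,d_k,n_1,…,n_m), let d^1,…,d^s be dimension vectors with d^1 + ⋯ + d^s = d and ∑_i d^ℓ_{\underline i} = ∑_j p_j d^ℓ_j for every ℓ ∈ [s], and for t ∈ ℝ, t ≠ 0, let λ(t) be the tuple of invertible diagonal matrices λ(t)_x = blockdiag(t^{s-1} I_{d^s_x}, t^{s-2} I_{d^{s-1}_x}, …, I_{d^1_x}) at each vertex x. Then cap(λ(t)·V, p) = cap(V, p) for every t ≠ 0. -/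
open Matrix BigOperators

/-- The embedding of the `ℓ`-th block into the concatenation: `fembed f ℓ r` is the index
of position `r` of block `ℓ`, the blocks being laid out in increasing order of `ℓ`. -/
def fembed {s : ℕ} (f : Fin s → ℕ) (ℓ : Fin s) (r : Fin (f ℓ)) : Fin (∑ ℓ' : Fin s, f ℓ') :=
  ⟨(∑ ℓ' ∈ Finset.univ.filter (fun ℓ' => ℓ' < ℓ), f ℓ') + (r : ℕ), by
    have h2 : f ℓ + ∑ ℓ' ∈ Finset.univ.filter (fun ℓ' => ℓ' < ℓ), f ℓ' ≤ ∑ ℓ' : Fin s, f ℓ' := by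
      rw [← Finset.sum_insert (by simp)]
      exact Finset.sum_le_sum_of_subset (Finset.subset_univ _)
    have h3 := r.isLt
    omega⟩

section Helpers

lemma fembed_injective {s : ℕ} (f : Fin s → ℕ) :
    Function.Injective (fun σ : Σ ℓ : Fin s, Fin (f ℓ) => fembed f σ.1 σ.2) := by
  have key : ∀ a b : Fin s, a < b →
      (∑ x ∈ Finset.univ.filter (fun x => x < a), f x) + f a ≤
        ∑ x ∈ Finset.univ.filter (fun x => x < b), f x := by
    intro a b hab
    have hsub : insert a (Finset.univ.filter (fun x => x < a)) ⊆
        Finset.univ.filter (fun x => x < b) := by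
      intro x hx
      simp only [Finset.mem_insert, Finset.mem_filter, Finset.mem_univ, true_and] at hx ⊢
      rcases hx with rfl | hx
      · exact hab
      · exact hx.trans hab
    calc (∑ x ∈ Finset.univ.filter (fun x => x < a), f x) + f a
        = ∑ x ∈ insert a (Finset.univ.filter (fun x => x < a)), f x := by
          rw [Finset.sum_insert (by simp)]; ring
      _ ≤ ∑ x ∈ Finset.univ.filter (fun x => x < b), f x :=
          Finset.sum_le_sum_of_subset hsub
  rintro ⟨ℓ, r⟩ ⟨ℓ', c⟩ h
  simp only [fembed, Fin.mk.injEq] at h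
  have hll : ℓ = ℓ' := by
    by_contra hne
    rcases lt_or_gt_of_ne hne with hlt | hlt
    · have := key ℓ ℓ' hlt; have := r.isLt; omega
    · have := key ℓ' ℓ hlt; have := c.isLt; omega
  subst hll
  have hrc : r = c := Fin.ext (by omega)
  subst hrc
  rfl

lemma fembed_bijective {s : ℕ} (f : Fin s → ℕ) :
    Function.Bijective (fun σ : Σ ℓ : Fin s, Fin (f ℓ) => fembed f σ.1 σ.2) :=
  (Fintype.bijective_iff_injective_and_card _).2
    ⟨fembed_injective f, by simp [Fintype.card_sigma]⟩

/-- A matrix whose entries in the block layout are `g ℓ` on the diagonal of block `ℓ` and `0`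
elsewhere has determinant `∏ ℓ, g ℓ ^ f ℓ`. -/
lemma block_det {s N : ℕ} (f : Fin s → ℕ) (hf : (∑ ℓ : Fin s, f ℓ) = N)
    (g : Fin s → ℝ) (M : Matrix (Fin N) (Fin N) ℝ)
    (h : ∀ (ℓ ℓ' : Fin s) (r : Fin (f ℓ)) (c : Fin (f ℓ')),
      M (Fin.cast hf (fembed f ℓ r)) (Fin.cast hf (fembed f ℓ' c)) =
        if (ℓ : ℕ) = (ℓ' : ℕ) ∧ (r : ℕ) = (c : ℕ) then g ℓ else 0) :
    M.det = ∏ ℓ : Fin s, g ℓ ^ f ℓ := by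
  let e : (Σ ℓ : Fin s, Fin (f ℓ)) ≃ Fin N :=
    (Equiv.ofBijective _ (fembed_bijective f)).trans (finCongr hf)
  have he_apply : ∀ σ : Σ ℓ : Fin s, Fin (f ℓ), e σ = Fin.cast hf (fembed f σ.1 σ.2) :=
    fun σ => rfl
  have hM : M = Matrix.diagonal (fun x => g (e.symm x).1) := by
    ext x y
    obtain ⟨σ, rfl⟩ := e.surjective x
    obtain ⟨τ, rfl⟩ := e.surjective y
    obtain ⟨ℓ, r⟩ := σ
    obtain ⟨ℓ', c⟩ := τ
    have hMxy : M (e ⟨ℓ, r⟩) (e ⟨ℓ', c⟩) =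
        if (ℓ : ℕ) = (ℓ' : ℕ) ∧ (r : ℕ) = (c : ℕ) then g ℓ else 0 := h ℓ ℓ' r c
    rw [Matrix.diagonal_apply, Equiv.symm_apply_apply, hMxy]
    by_cases hc : (ℓ : ℕ) = (ℓ' : ℕ) ∧ (r : ℕ) = (c : ℕ)
    · obtain ⟨h1, h2⟩ := hc
      have hℓ : ℓ = ℓ' := Fin.ext h1
      subst hℓ
      have hr : r = c := Fin.ext h2
      subst hr
      simp
    · have hne : e ⟨ℓ, r⟩ ≠ e ⟨ℓ', c⟩ := by
        intro hEq
        have h2 := e.injective hEq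
        cases h2
        exact hc ⟨rfl, rfl⟩
      simp [hc, hne]
  rw [hM, Matrix.det_diagonal]
  rw [← Equiv.prod_comp e (fun x => g (e.symm x).1)]
  simp only [Equiv.symm_apply_apply]
  rw [← Finset.univ_sigma_univ, Finset.prod_sigma]
  exact Finset.prod_congr rfl fun ℓ _ => by simp

/-- Congruence by an invertible matrix preserves positive definiteness (real case). -/
lemma posdef_congr {N : ℕ} {Y B : Matrix (Fin N) (Fin N) ℝ} (hY : Y.PosDef)
    (hB : IsUnit B.det) : (Bᵀ * Y * B).PosDef := by
  have hYsymm : Yᵀ = Y := by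
    have := hY.1
    rw [← Matrix.conjTranspose_eq_transpose_of_trivial]; exact this
  refine Matrix.posDef_iff_dotProduct_mulVec.mpr ⟨?_, ?_⟩
  · show (Bᵀ * Y * B)ᴴ = Bᵀ * Y * B
    have : ∀ M : Matrix (Fin N) (Fin N) ℝ, Mᴴ = Mᵀ := by
      intro M; ext i j; simp [Matrix.conjTranspose_apply]
    rw [this, Matrix.transpose_mul, Matrix.transpose_mul, Matrix.transpose_transpose, hYsymm,
      Matrix.mul_assoc]
  · intro x hx
    have hBx : B *ᵥ x ≠ 0 := by
      intro h0
      apply hx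
      have : (B⁻¹ * B) *ᵥ x = 0 := by
        rw [← Matrix.mulVec_mulVec, h0, Matrix.mulVec_zero]
      rwa [Matrix.nonsing_inv_mul _ hB, Matrix.one_mulVec] at this
    have hq := hY.dotProduct_mulVec_pos hBx
    have hstar : ∀ v : Fin N → ℝ, star v = v := fun v => rfl
    calc (0:ℝ) < star (B *ᵥ x) ⬝ᵥ (Y *ᵥ (B *ᵥ x)) := hq
      _ = star x ⬝ᵥ ((Bᵀ * Y * B) *ᵥ x) := by
          rw [hstar, hstar, ← Matrix.mulVec_mulVec, ← Matrix.mulVec_mulVec,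
            Matrix.dotProduct_mulVec x, Matrix.vecMul_transpose]

end Helpers

/-- Let `d¹, …, dˢ` be dimension vectors summing to the dimension vector
of `V`, each orthogonal to `p`. For `t ≠ 0`, let `λ(t)` be the tuple of block-scalar
diagonal matrices whose block `ℓ` (in the layout `d^s, …, d^1`, i.e. block `ℓ` gets
exponent `s - 1 - ℓ`) is `t^{s-1-ℓ}` times the identity. Then
`cap(λ(t)·V, p) = cap(V, p)`. -/
theorem cap_invariant_under_one_param_subgroup {k m : ℕ} (hk : 0 < k) (hm : 0 < m)
    {d : Fin k → ℕ} {n : Fin m → ℕ} {A : Fin k → Fin m → ℕ} (p : Fin m → ℝ)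
    (hd : ∀ i, 0 < d i) (hn : ∀ j, 0 < n j) (hp : ∀ j, 0 < p j)
    (hbal : ∑ i : Fin k, (d i : ℝ) = ∑ j : Fin m, p j * (n j : ℝ))
    (V : ∀ i : Fin k, ∀ j : Fin m, Fin (A i j) → Matrix (Fin (n j)) (Fin (d i)) ℝ)
    (s : ℕ) (dd : Fin s → Fin k → ℕ) (nn : Fin s → Fin m → ℕ)
    (hd' : ∀ i, ∑ ℓ : Fin s, dd ℓ i = d i) (hn' : ∀ j, ∑ ℓ : Fin s, nn ℓ j = n j)
    (hperp : ∀ ℓ, ∑ i : Fin k, (dd ℓ i : ℝ) = ∑ j : Fin m, p j * (nn ℓ j : ℝ))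
    (t : ℝ) (ht : t ≠ 0)
    (ΛD : ∀ i : Fin k, Matrix (Fin (d i)) (Fin (d i)) ℝ)
    (ΛS : ∀ j : Fin m, Matrix (Fin (n j)) (Fin (n j)) ℝ)
    (hΛD : ∀ i (ℓ ℓ' : Fin s) (r : Fin (dd ℓ i)) (c : Fin (dd ℓ' i)),
      ΛD i (Fin.cast (hd' i) (fembed (fun ℓ'' => dd ℓ'' i) ℓ r))
          (Fin.cast (hd' i) (fembed (fun ℓ'' => dd ℓ'' i) ℓ' c)) =
        if (ℓ : ℕ) = (ℓ' : ℕ) ∧ (r : ℕ) = (c : ℕ) then t ^ (s - 1 - (ℓ : ℕ)) else 0)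
    (hΛS : ∀ j (ℓ ℓ' : Fin s) (r : Fin (nn ℓ j)) (c : Fin (nn ℓ' j)),
      ΛS j (Fin.cast (hn' j) (fembed (fun ℓ'' => nn ℓ'' j) ℓ r))
          (Fin.cast (hn' j) (fembed (fun ℓ'' => nn ℓ'' j) ℓ' c)) =
        if (ℓ : ℕ) = (ℓ' : ℕ) ∧ (r : ℕ) = (c : ℕ) then t ^ (s - 1 - (ℓ : ℕ)) else 0) :
    cap p (fun i j a => ΛS j * V i j a * (ΛD i)⁻¹) = cap p V := by
  -- total degrees of the blocks
  set eD : Fin k → ℕ := fun i => ∑ ℓ : Fin s, (s - 1 - (ℓ : ℕ)) * dd ℓ i with heD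
  set eS : Fin m → ℕ := fun j => ∑ ℓ : Fin s, (s - 1 - (ℓ : ℕ)) * nn ℓ j with heS
  have ht2 : (0:ℝ) < t ^ 2 := by positivity
  have hdetD : ∀ i, (ΛD i).det = t ^ eD i := by
    intro i
    rw [block_det (fun ℓ => dd ℓ i) (hd' i) (fun ℓ => t ^ (s - 1 - (ℓ : ℕ))) (ΛD i) (hΛD i)]
    simp_rw [← pow_mul]
    rw [Finset.prod_pow_eq_pow_sum]
  have hdetS : ∀ j, (ΛS j).det = t ^ eS j := by
    intro j
    rw [block_det (fun ℓ => nn ℓ j) (hn' j) (fun ℓ => t ^ (s - 1 - (ℓ : ℕ))) (ΛS j) (hΛS j)]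
    simp_rw [← pow_mul]
    rw [Finset.prod_pow_eq_pow_sum]
  have hSinv : ∀ j, IsUnit (ΛS j).det := fun j => by
    rw [hdetS]; exact isUnit_iff_ne_zero.2 (pow_ne_zero _ ht)
  have hDinv : ∀ i, IsUnit (ΛD i).det := fun i => by
    rw [hdetD]; exact isUnit_iff_ne_zero.2 (pow_ne_zero _ ht)
  -- the central exponent identity
  have hkey : (∑ i, (eD i : ℝ)) = ∑ j, p j * (eS j : ℝ) := by
    have lhs : (∑ i, (eD i : ℝ)) =
        ∑ ℓ : Fin s, ((s - 1 - (ℓ : ℕ) : ℕ) : ℝ) * ∑ i, (dd ℓ i : ℝ) := by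
      simp only [heD]
      push_cast
      rw [Finset.sum_comm]
      exact Finset.sum_congr rfl fun ℓ _ => by rw [Finset.mul_sum]
    have rhs : (∑ j, p j * (eS j : ℝ)) =
        ∑ ℓ : Fin s, ((s - 1 - (ℓ : ℕ) : ℕ) : ℝ) * ∑ j, p j * (nn ℓ j : ℝ) := by
      simp only [heS]
      push_cast
      simp_rw [Finset.mul_sum]
      rw [Finset.sum_comm]
      exact Finset.sum_congr rfl fun ℓ _ => Finset.sum_congr rfl fun j _ => by ring
    rw [lhs, rhs]
    exact Finset.sum_congr rfl fun ℓ _ => by rw [hperp ℓ]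
  -- the product of the scaling factors in the denominator
  have hprodE : (∏ j, (((t : ℝ) ^ 2) ^ eS j) ^ (p j)) = (t ^ 2) ^ (∑ i, eD i) := by
    have h1 : ∀ j : Fin m, (((t : ℝ) ^ 2) ^ eS j) ^ (p j) =
        Real.exp (Real.log (t ^ 2) * ((eS j : ℝ) * p j)) := by
      intro j
      rw [← Real.rpow_natCast (t ^ 2) (eS j), ← Real.rpow_mul ht2.le,
        Real.rpow_def_of_pos ht2]
    simp_rw [h1]
    rw [← Real.exp_sum, ← Finset.mul_sum]
    have h2 : (∑ j, (eS j : ℝ) * p j) = ∑ i, (eD i : ℝ) := by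
      rw [hkey]; exact Finset.sum_congr rfl fun j _ => mul_comm _ _
    rw [h2, ← Real.rpow_def_of_pos ht2,
      show (∑ i, (eD i : ℝ)) = ((∑ i, eD i : ℕ) : ℝ) by push_cast; ring,
      Real.rpow_natCast]
  -- main capacity-functional identity
  have hcv : ∀ Y : ∀ j : Fin m, Matrix (Fin (n j)) (Fin (n j)) ℝ, (∀ j, (Y j).PosDef) →
      capVal p (fun i j a => ΛS j * V i j a * (ΛD i)⁻¹) Y =
        capVal p V (fun j => (ΛS j)ᵀ * Y j * ΛS j) := by
    intro Y hY
    have hnum : ∀ i, (∑ j, p j • ∑ a, (ΛS j * V i j a * (ΛD i)⁻¹)ᵀ * Y j *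
          (ΛS j * V i j a * (ΛD i)⁻¹)) =
        ((ΛD i)⁻¹)ᵀ * (∑ j, p j • ∑ a, (V i j a)ᵀ * ((ΛS j)ᵀ * Y j * ΛS j) * V i j a) *
          (ΛD i)⁻¹ := by
      intro i
      simp only [Matrix.transpose_mul, Matrix.mul_sum, Matrix.sum_mul, Matrix.mul_smul,
        Matrix.smul_mul, Matrix.mul_assoc]
    have hdetnum : ∀ i, (∑ j, p j • ∑ a, (ΛS j * V i j a * (ΛD i)⁻¹)ᵀ * Y j *
          (ΛS j * V i j a * (ΛD i)⁻¹)).det =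
        (((t : ℝ) ^ 2) ^ eD i)⁻¹ *
          (∑ j, p j • ∑ a, (V i j a)ᵀ * ((ΛS j)ᵀ * Y j * ΛS j) * V i j a).det := by
      intro i
      rw [hnum i, Matrix.det_mul, Matrix.det_mul, Matrix.det_transpose,
        Matrix.det_nonsing_inv, hdetD i, Ring.inverse_eq_inv,
        show ((((t : ℝ) ^ 2) ^ eD i)⁻¹ : ℝ) = (t ^ eD i)⁻¹ * (t ^ eD i)⁻¹ by
          rw [← mul_inv, ← pow_add, ← two_mul, pow_mul]]
      ring
    have hQpos : ∀ j, (0:ℝ) < (Y j).det := fun j => (hY j).det_pos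
    have hdetY' : ∀ j, ((ΛS j)ᵀ * Y j * ΛS j).det = ((t : ℝ) ^ 2) ^ eS j * (Y j).det := by
      intro j
      rw [Matrix.det_mul, Matrix.det_mul, Matrix.det_transpose, hdetS j,
        show ((t : ℝ) ^ 2) ^ eS j = t ^ eS j * t ^ eS j by
          rw [← pow_mul, two_mul, pow_add]]
      ring
    unfold capVal
    have hnumprod : (∏ i, (∑ j, p j • ∑ a, (ΛS j * V i j a * (ΛD i)⁻¹)ᵀ * Y j *
          (ΛS j * V i j a * (ΛD i)⁻¹)).det) =
        (((t : ℝ) ^ 2) ^ (∑ i, eD i))⁻¹ *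
          ∏ i, (∑ j, p j • ∑ a, (V i j a)ᵀ * ((ΛS j)ᵀ * Y j * ΛS j) * V i j a).det := by
      rw [Finset.prod_congr rfl fun i _ => hdetnum i, Finset.prod_mul_distrib,
        Finset.prod_inv_distrib, Finset.prod_pow_eq_pow_sum]
    have hden : (∏ j, ((ΛS j)ᵀ * Y j * ΛS j).det ^ (p j)) =
        (((t : ℝ) ^ 2) ^ (∑ i, eD i)) * ∏ j, (Y j).det ^ (p j) := by
      have h3 : ∀ j, ((ΛS j)ᵀ * Y j * ΛS j).det ^ (p j) =
          ((((t : ℝ) ^ 2) ^ eS j) ^ (p j)) * (Y j).det ^ (p j) := by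
        intro j
        rw [hdetY' j, Real.mul_rpow (by positivity) (hQpos j).le]
      rw [Finset.prod_congr rfl fun j _ => h3 j, Finset.prod_mul_distrib, hprodE]
    rw [hnumprod, hden]
    have hT : (((t : ℝ) ^ 2) ^ (∑ i, eD i)) ≠ 0 := by positivity
    have hQ : (0:ℝ) < ∏ j, (Y j).det ^ (p j) :=
      Finset.prod_pos fun j _ => Real.rpow_pos_of_pos (hQpos j) _
    field_simp
  -- positive-definiteness transfer and set equality
  have hset : {r : ℝ | ∃ Y : ∀ j : Fin m, Matrix (Fin (n j)) (Fin (n j)) ℝ,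
        (∀ j, (Y j).PosDef) ∧
          r = capVal p (fun i j a => ΛS j * V i j a * (ΛD i)⁻¹) Y} =
      {r : ℝ | ∃ Y : ∀ j : Fin m, Matrix (Fin (n j)) (Fin (n j)) ℝ,
        (∀ j, (Y j).PosDef) ∧ r = capVal p V Y} := by
    ext r
    simp only [Set.mem_setOf_eq]
    constructor
    · rintro ⟨Y, hY, rfl⟩
      exact ⟨fun j => (ΛS j)ᵀ * Y j * ΛS j, fun j => posdef_congr (hY j) (hSinv j), hcv Y hY⟩
    · rintro ⟨Z, hZ, rfl⟩
      have hSinv' : ∀ j, IsUnit ((ΛS j)⁻¹).det := by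
        intro j
        refine isUnit_of_mul_isUnit_left (y := (ΛS j).det) ?_
        rw [← Matrix.det_mul, Matrix.nonsing_inv_mul _ (hSinv j), Matrix.det_one]
        exact isUnit_one
      refine ⟨fun j => ((ΛS j)⁻¹)ᵀ * Z j * (ΛS j)⁻¹,
        fun j => posdef_congr (hZ j) (hSinv' j), ?_⟩
      rw [hcv _ (fun j => posdef_congr (hZ j) (hSinv' j))]
      congr 1
      funext j
      symm
      have h1 : (ΛS j)ᵀ * ((ΛS j)⁻¹)ᵀ = 1 := by
        rw [← Matrix.transpose_mul, Matrix.nonsing_inv_mul _ (hSinv j), Matrix.transpose_one]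
      have h2 : (ΛS j)⁻¹ * ΛS j = 1 := Matrix.nonsing_inv_mul _ (hSinv j)
      calc (ΛS j)ᵀ * (((ΛS j)⁻¹)ᵀ * Z j * (ΛS j)⁻¹) * ΛS j
          = ((ΛS j)ᵀ * ((ΛS j)⁻¹)ᵀ) * Z j * ((ΛS j)⁻¹ * ΛS j) := by
            simp only [Matrix.mul_assoc]
        _ = Z j := by rw [h1, h2, Matrix.one_mul, Matrix.mul_one]
  unfold cap
  rw [hset]
end
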